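/- arXiv:2406.06831 — 2 statements merged into one kernel-verified Lean document; each statement's English description precedes it below -/
import Mathlib

section
/- Let v : ℝ → ℝ be twice continuously differentiable, 2π-periodic and everywhere positive, and define G : ℝ² → ℝ by G(w) = r²/v(θ)² whenever w = r·(cos θ, sin θ) with r > 0 (and G(0) = 0). For w = r·(cos θ, sin θ) with r > 0, the fundamental tensor g_w(u₁,u₂) := (1/2)·∂²/∂s∂t [G(w + s·u₁ + t·u₂)]|_{s=t=0} evaluated on the standard basis vector e₁ = (1,0) satisfies g_w(e₁, e₁) = (1/v(θ)²)·(1 + sin(2θ)·v'(θ)/v(θ) + sin²θ·(3·v'(θ)²/v(θ)² − v''(θ)/v(θ))). -/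
/-- The fundamental tensor of `G = F²` at `w`, evaluated on `u₁, u₂`:
`g_w(u₁,u₂) = (1/2) ∂²/∂s∂t [G(w + s u₁ + t u₂)] |_{s=t=0}`. -/
noncomputable def fundTensor (G : ℝ × ℝ → ℝ) (w u₁ u₂ : ℝ × ℝ) : ℝ :=
  (1 / 2) * deriv (fun s : ℝ => deriv (fun t : ℝ => G (w + s • u₁ + t • u₂)) 0) 0

/-!
Along the horizontal line through `w = r (cos θ, sin θ)`, the point `w + u e₁` has squared norm
`N u = r² + 2 r u cos θ + u²` and, while `r + u cos θ > 0`, polar angle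
`φ u = θ + arctan (-u sin θ / (r + u cos θ))`; hence `G (w + u e₁) = N u * h (φ u)`
with `h = v⁻²`.
As `g_w(e₁, e₁) = ½ (d/du)² G (w + u e₁)` at `u = 0`, the product and chain rules with
`N 0 = r²`, `N' 0 = 2 r cos θ`, `N'' = 2`, `φ 0 = θ` and `φ' = -r sin θ / N` give
`g_w(e₁, e₁) = h - sin θ cos θ h' + ½ sin² θ h''`, and `h' = -2 v' / v³`,
`h'' = (6 v'² - 2 v v'') / v⁴` turn this into the stated formula.
-/

open Real Filter Topology

theorem sqrt_one_add_div_sq {p : ℝ} (hp : 0 < p) (q : ℝ) :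
    √(1 + (q / p) ^ 2) = √(p ^ 2 + q ^ 2) / p := by
  rw [← sqrt_sq hp.le, ← sqrt_div' _ (sq_nonneg p), sqrt_sq hp.le]
  congr 1
  field_simp

theorem sqrt_mul_cos_arctan_div {p : ℝ} (hp : 0 < p) (q : ℝ) :
    √(p ^ 2 + q ^ 2) * cos (arctan (q / p)) = p := by
  have : 0 < √(p ^ 2 + q ^ 2) := by positivity
  rw [cos_arctan, sqrt_one_add_div_sq hp]
  field_simp

theorem sqrt_mul_sin_arctan_div {p : ℝ} (hp : 0 < p) (q : ℝ) :
    √(p ^ 2 + q ^ 2) * sin (arctan (q / p)) = q := by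
  have : 0 < √(p ^ 2 + q ^ 2) := by positivity
  rw [sin_arctan, sqrt_one_add_div_sq hp]
  field_simp

section LinePolar

variable (r θ : ℝ)

noncomputable def lineNormSq (u : ℝ) : ℝ := r ^ 2 + 2 * r * cos θ * u + u ^ 2

noncomputable def lineAngle (u : ℝ) : ℝ := θ + arctan (-(u * sin θ) / (r + u * cos θ))

variable {r θ}

theorem lineNormSq_eq (u : ℝ) :
    lineNormSq r θ u = (r + u * cos θ) ^ 2 + (-(u * sin θ)) ^ 2 := by
  unfold lineNormSq
  linear_combination (-u ^ 2) * sin_sq_add_cos_sq θ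

theorem hasDerivAt_lineNormSq (u : ℝ) :
    HasDerivAt (lineNormSq r θ) (2 * r * cos θ + 2 * u) u := by
  have := (((hasDerivAt_id' u).const_mul (2 * r * cos θ)).const_add (r ^ 2)).add
    (hasDerivAt_pow 2 u)
  exact this.congr_deriv (by ring)

theorem hasDerivAt_lineAngle {u : ℝ} (hu : r + u * cos θ ≠ 0) :
    HasDerivAt (lineAngle r θ) (-(r * sin θ) / lineNormSq r θ u) u := by
  have hq : HasDerivAt (fun u => -(u * sin θ) / (r + u * cos θ))
      (-(r * sin θ) / (r + u * cos θ) ^ 2) u := by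
    have := ((hasDerivAt_id' u).mul_const (sin θ)).fun_neg.div
      (((hasDerivAt_id' u).mul_const (cos θ)).const_add r) hu
    exact this.congr_deriv (by field_simp; ring)
  refine (((hasDerivAt_arctan _).comp u hq).const_add θ).congr_deriv ?_
  rw [lineNormSq_eq]
  field_simp

theorem sqrt_lineNormSq_mul_cos_lineAngle {u : ℝ} (hu : 0 < r + u * cos θ) :
    √(lineNormSq r θ u) * cos (lineAngle r θ u) = r * cos θ + u := by
  rw [lineAngle, cos_add, mul_sub, mul_left_comm, mul_left_comm _ (sin θ), lineNormSq_eq,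
    sqrt_mul_cos_arctan_div hu, sqrt_mul_sin_arctan_div hu]
  linear_combination u * sin_sq_add_cos_sq θ

theorem sqrt_lineNormSq_mul_sin_lineAngle {u : ℝ} (hu : 0 < r + u * cos θ) :
    √(lineNormSq r θ u) * sin (lineAngle r θ u) = r * sin θ := by
  rw [lineAngle, sin_add, mul_add, mul_left_comm, mul_left_comm _ (cos θ), lineNormSq_eq,
    sqrt_mul_cos_arctan_div hu, sqrt_mul_sin_arctan_div hu]
  ring

theorem lineNormSq_pos {u : ℝ} (hu : 0 < r + u * cos θ) : 0 < lineNormSq r θ u := by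
  rw [lineNormSq_eq]; positivity

@[simp] theorem lineNormSq_zero : lineNormSq r θ 0 = r ^ 2 := by simp [lineNormSq]

@[simp] theorem lineAngle_zero : lineAngle r θ 0 = θ := by simp [lineAngle]

theorem hasDerivAt_neg_div_lineNormSq (hr : r ≠ 0) :
    HasDerivAt (fun u => -(r * sin θ) / lineNormSq r θ u) (2 * sin θ * cos θ / r ^ 2) 0 :=
  ((hasDerivAt_const (0 : ℝ) (-(r * sin θ))).fun_div (hasDerivAt_lineNormSq 0)
    (by simp [hr])).congr_deriv (by simp only [lineNormSq_zero]; field_simp; ring)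

theorem eventually_pos_add_mul_cos (hr : 0 < r) : ∀ᶠ u in 𝓝 (0 : ℝ), 0 < r + u * cos θ := by
  have hc : Continuous fun u : ℝ => r + u * cos θ := by fun_prop
  exact hc.continuousAt.eventually (lt_mem_nhds (by simpa using hr))

end LinePolar

theorem hasDerivAt_inv_sq {f : ℝ → ℝ} {f' x : ℝ} (hf : HasDerivAt f f' x) (hx : f x ≠ 0) :
    HasDerivAt (fun y => (f y ^ 2)⁻¹) (-2 * f' / f x ^ 3) x :=
  ((hf.pow 2).inv (pow_ne_zero 2 hx)).congr_deriv
    (by simp only [Pi.pow_apply]; field_simp; ring)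

theorem hasDerivAt_neg_two_mul_div_pow_three {f g : ℝ → ℝ} {f' g' x : ℝ}
    (hg : HasDerivAt g g' x) (hf : HasDerivAt f f' x) (hx : f x ≠ 0) :
    HasDerivAt (fun y => -2 * g y / f y ^ 3) (-2 * (g' * f x - 3 * g x * f') / f x ^ 4) x :=
  ((hg.const_mul (-2)).fun_div (hf.pow 3) (pow_ne_zero 3 hx)).congr_deriv
    (by simp only [Pi.pow_apply]; field_simp; ring)

theorem fundTensor_self (G : ℝ × ℝ → ℝ) (w u : ℝ × ℝ) :
    fundTensor G w u u = (1 / 2) * deriv (deriv fun t : ℝ => G (w + t • u)) 0 := by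
  have h : ∀ s t : ℝ, w + s • u + t • u = w + (s + t) • u := fun s t => by
    rw [add_smul, add_assoc]
  simp only [fundTensor, h, deriv_comp_const_add (fun t => G (w + t • u)), add_zero]

theorem hasDerivAt_deriv_mul_comp {A A' φ φ' h h' : ℝ → ℝ} {x A'' φ'' h'' : ℝ}
    (hA : ∀ᶠ u in 𝓝 x, HasDerivAt A (A' u) u) (hφ : ∀ᶠ u in 𝓝 x, HasDerivAt φ (φ' u) u)
    (hh : ∀ y, HasDerivAt h (h' y) y) (hA' : HasDerivAt A' A'' x) (hφ' : HasDerivAt φ' φ'' x)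
    (hh' : HasDerivAt h' h'' (φ x)) :
    HasDerivAt (deriv fun u => A u * h (φ u))
      (A'' * h (φ x) + 2 * A' x * (h' (φ x) * φ' x) +
        A x * (h'' * φ' x ^ 2 + h' (φ x) * φ'')) x := by
  have hderiv : deriv (fun u => A u * h (φ u)) =ᶠ[𝓝 x]
      fun u => A' u * h (φ u) + A u * (h' (φ u) * φ' u) := by
    filter_upwards [hA, hφ] with u hAu hφu
    exact (hAu.mul ((hh _).comp u hφu)).deriv
  have hφx := hφ.self_of_nhds
  refine HasDerivAt.congr_of_eventuallyEq ?_ hderiv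
  exact ((hA'.mul ((hh _).comp x hφx)).add
    (hA.self_of_nhds.mul ((hh'.comp x hφx).mul hφ'))).congr_deriv
    (by simp only [Function.comp_apply, Pi.mul_apply]; ring)

theorem eq_lineNormSq_div_of_polar {v : ℝ → ℝ} {G : ℝ × ℝ → ℝ}
    (hG : ∀ r θ : ℝ, 0 < r → G (r * cos θ, r * sin θ) = r ^ 2 / (v θ) ^ 2)
    {r θ u : ℝ} (hu : 0 < r + u * cos θ) :
    G ((r * cos θ, r * sin θ) + u • (1, 0)) = lineNormSq r θ u / v (lineAngle r θ u) ^ 2 := by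
  have hpos := sqrt_pos.2 (lineNormSq_pos hu)
  have := hG _ (lineAngle r θ u) hpos
  rw [sqrt_lineNormSq_mul_cos_lineAngle hu, sqrt_lineNormSq_mul_sin_lineAngle hu,
    sq_sqrt (lineNormSq_pos hu).le] at this
  simpa using this

theorem fundTensor_e1_e1_general
    (v : ℝ → ℝ) (hv : ContDiff ℝ 2 v)
    (hpos : ∀ θ, 0 < v θ) (G : ℝ × ℝ → ℝ)
    (hG : ∀ r θ : ℝ, 0 < r → G (r * Real.cos θ, r * Real.sin θ) = r ^ 2 / (v θ) ^ 2) :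
    ∀ r θ : ℝ, 0 < r →
      fundTensor G (r * Real.cos θ, r * Real.sin θ) (1, 0) (1, 0) =
        (1 / (v θ) ^ 2) *
          (1 + Real.sin (2 * θ) * (deriv v θ / v θ)
            + Real.sin θ ^ 2 *
                (3 * (deriv v θ) ^ 2 / (v θ) ^ 2 - deriv (deriv v) θ / v θ)) := by
  intro r θ hr
  have hv' : ∀ y, HasDerivAt v (deriv v y) y := fun y =>
    (hv.differentiable two_ne_zero y).hasDerivAt
  have hv'' : HasDerivAt (deriv v) (deriv (deriv v) θ) θ :=
    (hv.differentiable_deriv_two θ).hasDerivAt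
  have hline := eventually_pos_add_mul_cos (θ := θ) hr
  have hG_line : (fun t : ℝ => G ((r * cos θ, r * sin θ) + t • (1, 0))) =ᶠ[𝓝 0]
      fun u => lineNormSq r θ u * (fun y => (v y ^ 2)⁻¹) (lineAngle r θ u) := by
    filter_upwards [hline] with u hu
    rw [eq_lineNormSq_div_of_polar hG hu, div_eq_mul_inv]
  have hh : ∀ y, HasDerivAt (fun y => (v y ^ 2)⁻¹) (-2 * deriv v y / v y ^ 3) y :=
    fun y => hasDerivAt_inv_sq (hv' y) (hpos y).ne'
  have hh' := hasDerivAt_neg_two_mul_div_pow_three hv'' (hv' θ) (hpos θ).ne'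
  have hA' : HasDerivAt (fun u => 2 * r * cos θ + 2 * u) 2 0 :=
    ((hasDerivAt_id' 0).const_mul 2 |>.const_add _).congr_deriv (mul_one 2)
  rw [fundTensor_self, hG_line.deriv.deriv_eq,
    (hasDerivAt_deriv_mul_comp (.of_forall hasDerivAt_lineNormSq)
      (hline.mono fun u hu => hasDerivAt_lineAngle hu.ne') hh hA'
      (hasDerivAt_neg_div_lineNormSq hr.ne') (by rwa [lineAngle_zero])).deriv]
  simp only [lineNormSq_zero, lineAngle_zero, sin_two_mul]
  field_simp [(hpos θ).ne']
  ring

/-- In Cartesian coordinates,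
`g_w(e₁,e₁) = (1/v²)(1 + sin(2θ) v'/v + sin²θ (3 v'²/v² − v''/v))`. -/
theorem fundTensor_e1_e1
    (v : ℝ → ℝ) (hv : ContDiff ℝ 2 v) (hper : ∀ θ, v (θ + 2 * Real.pi) = v θ)
    (hpos : ∀ θ, 0 < v θ) (G : ℝ × ℝ → ℝ)
    (hG : ∀ r θ : ℝ, 0 < r → G (r * Real.cos θ, r * Real.sin θ) = r ^ 2 / (v θ) ^ 2)
    (hG0 : G 0 = 0) :
    ∀ r θ : ℝ, 0 < r →
      fundTensor G (r * Real.cos θ, r * Real.sin θ) (1, 0) (1, 0) =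
        (1 / (v θ) ^ 2) *
          (1 + Real.sin (2 * θ) * (deriv v θ / v θ)
            + Real.sin θ ^ 2 *
                (3 * (deriv v θ) ^ 2 / (v θ) ^ 2 - deriv (deriv v) θ / v θ)) :=
  fundTensor_e1_e1_general v hv hpos G hG
end

section
/- Let a, b ∈ ℝ with a ≠ 0 and b ≠ 0, and let v(θ) = (|cos(θ/2)|³/|a|³ + sin²(θ/2)/b²)^{−1/2} be the Gielis radius function with parameters m = 2, n₁ = 2, n₂ = 3, n₃ = 2, λ = 1 and phase 0. Then v is twice continuously differentiable, everywhere positive, 2π-periodic, and satisfies the strong convexity condition 2·v'(θ)² − v(θ)·v''(θ) + v(θ)² > 0 for all θ ∈ ℝ. -/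
/-!
Write `v = g^{-1/2}` with `g θ = |cos (θ/2)|³ / A + sin² (θ/2) / B`, `A = |a|³`, `B = b²`.
Since `|y|³` is `C²` (with derivatives `3 y |y|` and `6 |y|`), `g` is `C²` and positive, and
`v' = -g' v³ / 2` together with `v² g = 1` gives
`2 v'² - v v'' + v² = v⁶ (4 g² + 2 g g'' - g'²) / 4`.
Substituting `x = |cos (θ/2)|` and `sin² (θ/2) = 1 - x²`, the last factor is `(A B)⁻²` times
`3 A² (1 - x²)² + A B x (3 + 5x²/2 - 9x⁴/2) + (3/4 + 7x²/4) B² x⁴`,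
whose terms are nonnegative for `x ∈ [0, 1]` and do not all vanish.
-/

open Real Asymptotics

theorem hasDerivAt_mul_abs (x : ℝ) : HasDerivAt (fun y : ℝ => y * |y|) (2 * |x|) x := by
  rcases eq_or_ne x 0 with rfl | hx
  · rw [hasDerivAt_iff_isLittleO_nhds_zero]
    refine isLittleO_norm_left.mp ((isLittleO_pow_id one_lt_two).congr_left fun h => ?_)
    simp [sq]
  · refine ((hasDerivAt_id' x).mul (hasDerivAt_abs hx)).congr_deriv ?_
    rcases hx.lt_or_gt with h | h <;> simp [h, abs_of_neg, abs_of_pos] <;> ring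

theorem hasDerivAt_abs_pow_three (x : ℝ) :
    HasDerivAt (fun y : ℝ => |y| ^ 3) (3 * |x| * x) x := by
  have h := hasDerivAt_abs_rpow x (p := 3) (by norm_num)
  norm_num at h
  exact h

theorem hasDerivAt_cos_half (t : ℝ) : HasDerivAt (fun s => cos (s / 2)) (-sin (t / 2) / 2) t :=
  ((hasDerivAt_id' t).div_const 2).cos.congr_deriv (by ring)

theorem hasDerivAt_sin_half (t : ℝ) : HasDerivAt (fun s => sin (s / 2)) (cos (t / 2) / 2) t :=
  ((hasDerivAt_id' t).div_const 2).sin.congr_deriv (by ring)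

theorem contDiff_two_of_hasDerivAt {𝕜 F : Type*} [NontriviallyNormedField 𝕜]
    [NormedAddCommGroup F] [NormedSpace 𝕜 F] {f f' f'' : 𝕜 → F}
    (hf : ∀ x, HasDerivAt f (f' x) x) (hf' : ∀ x, HasDerivAt f' (f'' x) x)
    (hf'' : Continuous f'') : ContDiff 𝕜 2 f := by
  have hd : deriv f = f' := funext fun x => (hf x).deriv
  have hd' : deriv f' = f'' := funext fun x => (hf' x).deriv
  rw [show (2 : WithTop ℕ∞) = 1 + 1 from rfl, contDiff_succ_iff_deriv, hd,
    contDiff_one_iff_deriv, hd']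
  exact ⟨fun x => (hf x).differentiableAt, by simp, fun x => (hf' x).differentiableAt, hf''⟩

theorem HasDerivAt.inv_sqrt {g : ℝ → ℝ} {g' x : ℝ} (hg : HasDerivAt g g' x) (hx : 0 < g x) :
    HasDerivAt (fun t => (√(g t))⁻¹) (-(g' * (√(g x))⁻¹ ^ 3) / 2) x := by
  refine (hg.sqrt hx.ne').inv (sqrt_ne_zero'.mpr hx) |>.congr_deriv ?_
  have := sqrt_pos.mpr hx
  field_simp

theorem strongConvexity_inv_sqrt_eq {g g' g'' v : ℝ → ℝ} (hg : ∀ t, HasDerivAt g (g' t) t)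
    (hg' : ∀ t, HasDerivAt g' (g'' t) t) (hpos : ∀ t, 0 < g t)
    (hv : ∀ t, v t = (√(g t))⁻¹) (t : ℝ) :
    2 * deriv v t ^ 2 - v t * deriv (deriv v) t + v t ^ 2
      = v t ^ 6 / 4 * (4 * g t ^ 2 + 2 * g t * g'' t - g' t ^ 2) := by
  have hv_eq : v = fun t => (√(g t))⁻¹ := funext hv
  have hv' : ∀ t, HasDerivAt v (-(g' t * v t ^ 3) / 2) t := fun t => by
    simpa only [hv_eq] using (hg t).inv_sqrt (hpos t)
  have hdv : deriv v = fun t => -(g' t * v t ^ 3) / 2 := funext fun t => (hv' t).deriv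
  have hv'' : HasDerivAt (fun t => -(g' t * v t ^ 3) / 2)
      (-(g'' t * v t ^ 3 + g' t * (3 * v t ^ 2 * (-(g' t * v t ^ 3) / 2))) / 2) t := by
    refine (((hg' t).fun_mul ((hv' t).fun_pow 3)).fun_neg.div_const 2).congr_deriv ?_
    norm_num
  rw [hdv, hv''.deriv]
  have hvg : v t ^ 2 * g t = 1 := by
    rw [hv, inv_pow, sq_sqrt (hpos t).le, inv_mul_cancel₀ (hpos t).ne']
  linear_combination -(v t ^ 2 * (v t ^ 2 * g t + 1) + g'' t * v t ^ 4 / 2) * hvg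

namespace Gielis

variable (A B : ℝ)

noncomputable def invSq (t : ℝ) : ℝ := |cos (t / 2)| ^ 3 / A + sin (t / 2) ^ 2 / B

noncomputable def invSqDeriv (t : ℝ) : ℝ :=
  sin (t / 2) * cos (t / 2) / B - 3 * sin (t / 2) * (cos (t / 2) * |cos (t / 2)|) / (2 * A)

noncomputable def invSqDeriv2 (t : ℝ) : ℝ :=
  (cos (t / 2) ^ 2 - sin (t / 2) ^ 2) / (2 * B)
    - 3 * |cos (t / 2)| * (cos (t / 2) ^ 2 - 2 * sin (t / 2) ^ 2) / (4 * A)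

theorem hasDerivAt_invSq (t : ℝ) : HasDerivAt (invSq A B) (invSqDeriv A B t) t := by
  refine ((((hasDerivAt_abs_pow_three _).comp t (hasDerivAt_cos_half t)).div_const A).add
    (((hasDerivAt_sin_half t).pow 2).div_const B)).congr_deriv ?_
  simp only [invSqDeriv]
  ring

theorem hasDerivAt_invSqDeriv (t : ℝ) : HasDerivAt (invSqDeriv A B) (invSqDeriv2 A B t) t := by
  have hs := hasDerivAt_sin_half t
  have hc := hasDerivAt_cos_half t
  refine (((hs.mul hc).div_const B).sub
    (((hs.const_mul 3).mul ((hasDerivAt_mul_abs _).comp t hc)).div_const (2 * A))).congr_deriv ?_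
  simp only [invSqDeriv2, Function.comp_apply]
  ring

theorem continuous_invSqDeriv2 : Continuous (invSqDeriv2 A B) := by
  unfold invSqDeriv2
  fun_prop

theorem contDiff_invSq : ContDiff ℝ 2 (invSq A B) :=
  contDiff_two_of_hasDerivAt (hasDerivAt_invSq A B) (hasDerivAt_invSqDeriv A B)
    (continuous_invSqDeriv2 A B)

variable {A B}

theorem invSq_pos (hA : 0 < A) (hB : 0 < B) (t : ℝ) : 0 < invSq A B t := by
  rcases eq_or_ne (cos (t / 2)) 0 with hc | hc
  · have hs : sin (t / 2) ^ 2 = 1 := by nlinarith [sin_sq_add_cos_sq (t / 2)]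
    rw [invSq, hc, hs]
    positivity
  · unfold invSq
    positivity

theorem invSq_add_two_pi (t : ℝ) : invSq A B (t + 2 * π) = invSq A B t := by
  rw [invSq, invSq, add_div, show 2 * π / 2 = π by ring, cos_add_pi, sin_add_pi, abs_neg, neg_sq]

theorem convexityNumerator_poly_pos {A B x : ℝ} (hA : 0 < A) (hB : 0 < B) (hx0 : 0 ≤ x)
    (hx1 : x ≤ 1) :
    0 < 4 * (x ^ 3 / A + (1 - x ^ 2) / B) ^ 2
      + 2 * (x ^ 3 / A + (1 - x ^ 2) / B)
        * ((2 * x ^ 2 - 1) / (2 * B) - 3 * x * (3 * x ^ 2 - 2) / (4 * A))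
      - (1 - x ^ 2) * x ^ 2 * (1 / B - 3 * x / (2 * A)) ^ 2 := by
  have hnum : 0 < 3 * (A * (1 - x ^ 2)) ^ 2 + A * B * x * (3 + 5 / 2 * x ^ 2 - 9 / 2 * x ^ 4)
      + (3 / 4 + 7 / 4 * x ^ 2) * (B * x ^ 2) ^ 2 := by
    have hx2 : x ^ 2 ≤ 1 := by nlinarith
    have hquartic : 0 < 3 + 5 / 2 * x ^ 2 - 9 / 2 * x ^ 4 := by
      nlinarith [mul_le_mul_of_nonneg_left hx2 (sq_nonneg x)]
    rcases hx0.eq_or_lt with rfl | hx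
    · norm_num; positivity
    · positivity
  calc (0 : ℝ) < (3 * (A * (1 - x ^ 2)) ^ 2 + A * B * x * (3 + 5 / 2 * x ^ 2 - 9 / 2 * x ^ 4)
      + (3 / 4 + 7 / 4 * x ^ 2) * (B * x ^ 2) ^ 2) / (A ^ 2 * B ^ 2) := by positivity
    _ = _ := by field_simp; ring

theorem convexityNumerator_pos (hA : 0 < A) (hB : 0 < B) (t : ℝ) :
    0 < 4 * invSq A B t ^ 2 + 2 * invSq A B t * invSqDeriv2 A B t - invSqDeriv A B t ^ 2 := by
  set c := cos (t / 2)
  set s := sin (t / 2)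
  set x := |c|
  have hc2 : c ^ 2 = x ^ 2 := (sq_abs c).symm
  have hs2 : s ^ 2 = 1 - x ^ 2 := by linarith [sin_sq_add_cos_sq (t / 2)]
  have hg : invSq A B t = x ^ 3 / A + (1 - x ^ 2) / B := by rw [invSq, hs2]
  have hg' : invSqDeriv A B t ^ 2 = (1 - x ^ 2) * x ^ 2 * (1 / B - 3 * x / (2 * A)) ^ 2 := by
    rw [← hs2, ← hc2, invSqDeriv]
    ring
  have hg'' : invSqDeriv2 A B t
      = (2 * x ^ 2 - 1) / (2 * B) - 3 * x * (3 * x ^ 2 - 2) / (4 * A) := by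
    rw [invSqDeriv2, hc2, hs2]
    ring
  rw [hg, hg', hg'']
  exact convexityNumerator_poly_pos hA hB (abs_nonneg c) (abs_cos_le_one _)

end Gielis

/-- The Gielis radius function
`v(θ) = (|cos(θ/2)|³/|a|³ + sin²(θ/2)/b²)^{−1/2}` (parameters `m = 2`, `n₁ = 2`,
`n₂ = 3`, `n₃ = 2`, `λ = 1`, phase `0`) is twice continuously differentiable,
everywhere positive, `2π`-periodic, and strongly convex:
`2 v'(θ)² − v(θ) v''(θ) + v(θ)² > 0` for all `θ`. -/
theorem gielis_radius_is_minkowski (a b : ℝ) (ha : a ≠ 0) (hb : b ≠ 0)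
    (v : ℝ → ℝ)
    (hv : ∀ θ, v θ =
      1 / Real.sqrt (|Real.cos (θ / 2)| ^ 3 / |a| ^ 3 + Real.sin (θ / 2) ^ 2 / b ^ 2)) :
    ContDiff ℝ 2 v ∧ (∀ θ, 0 < v θ) ∧ (∀ θ, v (θ + 2 * Real.pi) = v θ) ∧
      ∀ θ : ℝ, 0 < 2 * (deriv v θ) ^ 2 - v θ * deriv (deriv v) θ + (v θ) ^ 2 := by
  have hA : 0 < |a| ^ 3 := by positivity
  have hB : 0 < b ^ 2 := by positivity
  have hg := Gielis.invSq_pos hA hB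
  have hv' : ∀ θ, v θ = (√(Gielis.invSq (|a| ^ 3) (b ^ 2) θ))⁻¹ := fun θ => by
    rw [hv, one_div, Gielis.invSq]
  have hv_pos : ∀ θ, 0 < v θ := fun θ => by
    rw [hv']
    exact inv_pos.mpr (sqrt_pos.mpr (hg θ))
  refine ⟨?_, hv_pos, fun θ => ?_, fun θ => ?_⟩
  · rw [funext hv']
    exact ((Gielis.contDiff_invSq _ _).sqrt fun θ => (hg θ).ne').inv
      fun θ => (sqrt_pos.mpr (hg θ)).ne'
  · rw [hv', hv', Gielis.invSq_add_two_pi]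
  · rw [strongConvexity_inv_sqrt_eq (Gielis.hasDerivAt_invSq _ _)
      (Gielis.hasDerivAt_invSqDeriv _ _) hg hv' θ]
    exact mul_pos (div_pos (pow_pos (hv_pos θ) 6) four_pos)
      (Gielis.convexityNumerator_pos hA hB θ)
end
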